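/- Let r ≥ 1, k ≥ 1, and l ≥ 2. Suppose G is an n-vertex graph with no k pairwise vertex-disjoint cycles of length 2l+1, L is the vertex set of a maximum collection of disjoint (2l+1)-cycles in G, and G'_R is the graph on V(G)\L whose edges are those pairs xy such that x and y have at least k common neighbors in L. Then G'_R contains no k pairwise vertex-disjoint cycles of length 2l. -/

import Mathlib

open SimpleGraph

universe u v

/-- An (injective) copy of the graph `F` inside the graph `G`. -/
structure GraphCopy {α : Type u} {β : Type v} (F : SimpleGraph α) (G : SimpleGraph β) where
  toFun : α → β
  inj : Function.Injective toFun
  adj : ∀ {a b : α}, F.Adj a b → G.Adj (toFun a) (toFun b)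

/-- `G` contains a copy of `F` (i.e. a subgraph isomorphic to `F`). -/
def Contains {α : Type u} {β : Type v} (F : SimpleGraph α) (G : SimpleGraph β) : Prop :=
  Nonempty (GraphCopy F G)

/-- `G` contains `k` pairwise vertex-disjoint copies of `F`. -/
def HasDisjCopies {α : Type u} {β : Type v} (F : SimpleGraph α) (G : SimpleGraph β)
    (k : ℕ) : Prop :=
  ∃ c : Fin k → GraphCopy F G,
    ∀ i j : Fin k, i ≠ j → Disjoint (Set.range (c i).toFun) (Set.range (c j).toFun)

/-- The join of two graphs: their disjoint union together with all cross edges. -/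
def gJoin {α : Type u} {β : Type v} (G : SimpleGraph α) (H : SimpleGraph β) :
    SimpleGraph (α ⊕ β) where
  Adj x y :=
    match x, y with
    | Sum.inl a, Sum.inl b => G.Adj a b
    | Sum.inr a, Sum.inr b => H.Adj a b
    | _, _ => True
  symm := by constructor; rintro (a | a) (b | b) h <;> first | exact h.symm | trivial
  loopless := by constructor; rintro (a | a) h; exacts [G.loopless.irrefl a h, H.loopless.irrefl a h]

/-- The Turán number: maximum number of edges of an `n`-vertex `F`-free graph. -/
noncomputable def exNum {α : Type u} (n : ℕ) (F : SimpleGraph α) : ℕ :=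
  sSup {m : ℕ | ∃ G : SimpleGraph (Fin n), ¬ Contains F G ∧ m = G.edgeSet.ncard}

/-- The number of (unlabeled) copies of `H` in `G`, i.e. the number of subgraphs of `G`
isomorphic to `H`. -/
noncomputable def copyCount {α : Type u} {β : Type v} (H : SimpleGraph α)
    (G : SimpleGraph β) : ℕ :=
  {A : G.Subgraph | Nonempty (H ≃g A.coe)}.ncard

/-- The generalized Turán number: maximum number of copies of `H` in an
`n`-vertex `F`-free graph. -/
noncomputable def exGen {α : Type u} {γ : Type v} (n : ℕ) (H : SimpleGraph α)
    (F : SimpleGraph γ) : ℕ :=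
  sSup {m : ℕ | ∃ G : SimpleGraph (Fin n), ¬ Contains F G ∧ m = copyCount H G}

/-- `s` is a matching in `G`: a set of edges of `G`, pairwise vertex-disjoint. -/
def IsMatchingSet {V : Type u} (G : SimpleGraph V) (s : Finset (Sym2 V)) : Prop :=
  ↑s ⊆ G.edgeSet ∧ ∀ e ∈ s, ∀ f ∈ s, e ≠ f → ∀ x : V, x ∈ e → x ∉ f

/-- The number of matchings of size `l` in `G`. -/
noncomputable def matchCount {V : Type u} (G : SimpleGraph V) (l : ℕ) : ℕ :=
  {s : Finset (Sym2 V) | s.card = l ∧ IsMatchingSet G s}.ncard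

/-- `G` contains `k` pairwise vertex-disjoint triangles. -/
def HasDisjTriangles {V : Type u} (G : SimpleGraph V) (k : ℕ) : Prop :=
  ∃ S : Finset (Finset V), S.card = k ∧ (∀ T ∈ S, G.IsNClique 3 T) ∧
    (S : Set (Finset V)).Pairwise fun T T' => Disjoint T T'

/-- The number of copies of `lK₃` (families of `l` pairwise disjoint triangles) in `G`. -/
noncomputable def disjTriFamCount {V : Type u} (G : SimpleGraph V) (l : ℕ) : ℕ :=
  {S : Finset (Finset V) | S.card = l ∧ (∀ T ∈ S, G.IsNClique 3 T) ∧
    (S : Set (Finset V)).Pairwise fun T T' => Disjoint T T'}.ncard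

/-- The graph on the complement of `L` whose edges are the edges `xy` of `G` such that
`x` and `y` have at least `k` common neighbors inside `L`. -/
def commonNbrGraph {V : Type u} (G : SimpleGraph V) (L : Set V) (k : ℕ) :
    SimpleGraph ↥(Lᶜ) where
  Adj x y := G.Adj x.val y.val ∧
    k ≤ {v : V | v ∈ L ∧ G.Adj x.val v ∧ G.Adj y.val v}.ncard
  symm := by
    constructor
    rintro x y ⟨h1, h2⟩
    refine ⟨h1.symm, ?_⟩
    have hset : {v : V | v ∈ L ∧ G.Adj y.val v ∧ G.Adj x.val v} =
        {v : V | v ∈ L ∧ G.Adj x.val v ∧ G.Adj y.val v} := by ext v; simp only [Set.mem_setOf_eq]; tauto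
    rw [hset]; exact h2
  loopless := by constructor; rintro x ⟨h, -⟩; exact G.loopless.irrefl _ h

/-! Each `2l`-cycle `x₀ ⋯ x_{2l-1}` of the common-neighbour graph has its closing pair
`x_{2l-1} x₀` joined through at least `k` vertices of `L`, which lie off every such cycle.
Choosing, greedily or by Hall's theorem, distinct such vertices `v_i` for `k` disjoint
`2l`-cycles and inserting `v_i` between `x_{2l-1}` and `x₀` gives `k` disjoint
`(2l+1)`-cycles of `G`. -/

theorem cycleGraph_adj_iff_val {m : ℕ} (hm : 2 ≤ m) {u v : Fin m} :
    (cycleGraph m).Adj u v ↔ u.val + 1 = v.val ∨ v.val + 1 = u.val ∨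
      (u.val + 1 = m ∧ v.val = 0) ∨ (v.val + 1 = m ∧ u.val = 0) := by
  rw [cycleGraph_adj']
  have := u.isLt
  have := v.isLt
  rcases lt_trichotomy u v with h | rfl | h
  · rw [Fin.coe_sub_iff_lt.mpr h, Fin.coe_sub_iff_le.mpr h.le]
    rw [Fin.lt_def] at h
    omega
  · rw [Fin.coe_sub_iff_le.mpr le_rfl]
    omega
  · rw [Fin.coe_sub_iff_lt.mpr h, Fin.coe_sub_iff_le.mpr h.le]
    rw [Fin.lt_def] at h
    omega

theorem exists_injective_forall_mem_of_card_le_ncard {ι V : Type*} [Fintype ι] (S : ι → Set V)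
    (hS : ∀ i, Fintype.card ι ≤ (S i).ncard) :
    ∃ f : ι → V, Function.Injective f ∧ ∀ i, f i ∈ S i := by
  classical
  rcases isEmpty_or_nonempty ι with hι | hι
  · exact ⟨isEmptyElim, fun i => isEmptyElim i, isEmptyElim⟩
  have hfin : ∀ i, (S i).Finite := fun i =>
    Set.finite_of_ncard_pos (Fintype.card_pos.trans_le (hS i))
  have hall : ∀ s : Finset ι, s.card ≤ (s.biUnion fun i => (hfin i).toFinset).card := by
    intro s
    rcases s.eq_empty_or_nonempty with rfl | ⟨i, hi⟩
    · simp
    calc s.card ≤ Fintype.card ι := s.card_le_univ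
      _ ≤ (hfin i).toFinset.card := (hS i).trans_eq (Set.ncard_eq_toFinset_card _ _)
      _ ≤ _ := Finset.card_le_card (Finset.subset_biUnion_of_mem (fun i => (hfin i).toFinset) hi)
  obtain ⟨f, hf, hmem⟩ := (Finset.all_card_le_biUnion_card_iff_exists_injective _).mp hall
  exact ⟨f, hf, fun i => by simpa using hmem i⟩

namespace GraphCopy

variable {α V W : Type*} {F : SimpleGraph α} {G : SimpleGraph V} {H : SimpleGraph W}

def comp (d : GraphCopy F G) (φ : G →g H) (hφ : Function.Injective φ) : GraphCopy F H where
  toFun := φ ∘ d.toFun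
  inj := hφ.comp d.inj
  adj h := φ.map_adj (d.adj h)

theorem range_comp (d : GraphCopy F G) (φ : G →g H) (hφ : Function.Injective φ) :
    Set.range (d.comp φ hφ).toFun = φ '' Set.range d.toFun :=
  Set.range_comp φ d.toFun

-- `v` subdivides the edge joining the last vertex of the cycle to `0`.
def cycleSnoc {n : ℕ} (d : GraphCopy (cycleGraph (n + 2)) G) (v : V)
    (hv : v ∉ Set.range d.toFun) (hlast : G.Adj (d.toFun (Fin.last (n + 1))) v)
    (hzero : G.Adj v (d.toFun 0)) : GraphCopy (cycleGraph (n + 3)) G where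
  toFun := Fin.snoc d.toFun v
  inj := Fin.snoc_injective_of_injective d.inj hv
  adj {a b} hab := by
    have hend (j : Fin (n + 2)) (h : (cycleGraph (n + 3)).Adj (Fin.last _) j.castSucc) :
        G.Adj v (d.toFun j) := by
      rw [cycleGraph_adj_iff_val (by omega)] at h
      simp only [Fin.val_castSucc, Fin.val_last] at h
      obtain rfl | rfl : j = 0 ∨ j = Fin.last (n + 1) := by
        simp only [Fin.ext_iff, Fin.val_last, Fin.val_zero]
        omega
      exacts [hzero, hlast.symm]
    induction a using Fin.lastCases with
    | last =>
      induction b using Fin.lastCases with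
      | last => exact absurd hab ((cycleGraph _).loopless.irrefl _)
      | cast j => simpa only [Fin.snoc_last, Fin.snoc_castSucc] using hend j hab
    | cast i =>
      induction b using Fin.lastCases with
      | last => simpa only [Fin.snoc_last, Fin.snoc_castSucc] using (hend i hab.symm).symm
      | cast j =>
        simp only [Fin.snoc_castSucc]
        rw [cycleGraph_adj_iff_val (by omega)] at hab
        refine d.adj ((cycleGraph_adj_iff_val (by omega)).mpr ?_)
        simp only [Fin.val_castSucc] at hab
        omega

theorem range_cycleSnoc {n : ℕ} (d : GraphCopy (cycleGraph (n + 2)) G) (v : V)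
    (hv : v ∉ Set.range d.toFun) (hlast : G.Adj (d.toFun (Fin.last (n + 1))) v)
    (hzero : G.Adj v (d.toFun 0)) :
    Set.range (d.cycleSnoc v hv hlast hzero).toFun = insert v (Set.range d.toFun) :=
  Fin.range_snoc _ _

end GraphCopy

section CommonNeighbors

variable {V : Type*} {G : SimpleGraph V} {L : Set V} {k : ℕ}

def commonNbrGraphHom (G : SimpleGraph V) (L : Set V) (k : ℕ) : commonNbrGraph G L k →g G where
  toFun := Subtype.val
  map_rel' h := h.1

theorem commonNbrGraphHom_injective : Function.Injective (commonNbrGraphHom G L k) :=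
  Subtype.val_injective

theorem hasDisjCopies_cycleGraph_succ_of_commonNbrGraph {m : ℕ} (hm : 2 ≤ m)
    (h : HasDisjCopies (cycleGraph m) (commonNbrGraph G L k) k) :
    HasDisjCopies (cycleGraph (m + 1)) G k := by
  obtain ⟨n, rfl⟩ : ∃ n, m = n + 2 := ⟨m - 2, by omega⟩
  obtain ⟨d, hd⟩ := h
  let e i := (d i).comp _ commonNbrGraphHom_injective
  have hclose (i : Fin k) :
      (commonNbrGraph G L k).Adj ((d i).toFun (Fin.last (n + 1))) ((d i).toFun 0) :=
    (d i).adj <| (cycleGraph_adj_iff_val (by omega)).mpr (by simp)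
  obtain ⟨f, hf, hfmem⟩ := exists_injective_forall_mem_of_card_le_ncard
    (fun i => {v | v ∈ L ∧ G.Adj ((e i).toFun (Fin.last (n + 1))) v ∧ G.Adj ((e i).toFun 0) v})
    (fun i => (Fintype.card_fin k).trans_le (hclose i).2)
  have hfresh (i j : Fin k) : f i ∉ Set.range (e j).toFun := by
    rintro ⟨a, ha⟩
    exact ((d j).toFun a).2 (show (e j).toFun a ∈ L from ha ▸ (hfmem i).1)
  refine ⟨fun i => (e i).cycleSnoc (f i) (hfresh i i) (hfmem i).2.1 (hfmem i).2.2.symm,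
    fun i j hij => ?_⟩
  rw [GraphCopy.range_cycleSnoc, GraphCopy.range_cycleSnoc, Set.disjoint_insert_left,
    Set.disjoint_insert_right, Set.mem_insert_iff, not_or]
  refine ⟨⟨hf.ne hij, hfresh i j⟩, hfresh j i, ?_⟩
  rw [GraphCopy.range_comp, GraphCopy.range_comp]
  exact (Set.disjoint_image_iff commonNbrGraphHom_injective).mpr (hd i j hij)

end CommonNeighbors

theorem stmt16_general {V : Type u} (G : SimpleGraph V) (r k l : ℕ)
    (hl : 2 ≤ l)
    (hfree : ¬ HasDisjCopies (cycleGraph (2 * l + 1)) G k)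
    (c : Fin r → GraphCopy (cycleGraph (2 * l + 1)) G) :
    ¬ HasDisjCopies (cycleGraph (2 * l))
        (commonNbrGraph G (⋃ i : Fin r, Set.range (c i).toFun) k) k :=
  fun h => hfree (hasDisjCopies_cycleGraph_succ_of_commonNbrGraph (by omega) h)

/-- If `G` has no `k` disjoint `(2l+1)`-cycles and `L` is the vertex set
of a maximum family of disjoint `(2l+1)`-cycles, then the auxiliary graph on `V∖L` has
no `k` disjoint `2l`-cycles. -/
theorem stmt16 {V : Type u} [Fintype V] (G : SimpleGraph V) (r k l : ℕ)
    (hk : 1 ≤ k) (hl : 2 ≤ l)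
    (hfree : ¬ HasDisjCopies (cycleGraph (2 * l + 1)) G k)
    (c : Fin r → GraphCopy (cycleGraph (2 * l + 1)) G)
    (hdisj : ∀ i j : Fin r, i ≠ j →
      Disjoint (Set.range (c i).toFun) (Set.range (c j).toFun))
    (hmax : ¬ HasDisjCopies (cycleGraph (2 * l + 1)) G (r + 1)) :
    ¬ HasDisjCopies (cycleGraph (2 * l))
        (commonNbrGraph G (⋃ i : Fin r, Set.range (c i).toFun) k) k :=
  stmt16_general G r k l hl hfree c
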